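/- Let V ⊆ F^n be a special subspace. Then, under the surjective F-algebra homomorphism π : F[t_1, …, t_m] → F[t_j : j ∈ S_V] with π(t_i) = 0 for i ∉ S_V and π(t_j) = t_j for j ∈ S_V, one has π^{-1}(I_V) = I + (t_i : i ∉ S_V); equivalently, π induces an isomorphism of F-algebras F[t_1, …, t_m]/(I + (t_i : i ∉ S_V)) ≅ F[t_j : j ∈ S_V]/I_V. -/

import Mathlib

open scoped TensorProduct
open MvPolynomial

noncomputable section

def zpoly {F : Type} [Field F] {n m : ℕ} (c : Fin m → Fin n → F) (i : Fin m) :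
    MvPolynomial (Fin n) F :=
  ∑ j, C (c i j) * X j

def lsupp {F : Type} [Field F] {m : ℕ} (a : Fin m → F) : Finset (Fin m) :=
  @Finset.filter _ (fun i => a i ≠ 0) (Classical.decPred _) Finset.univ

def IsLinRel {F : Type} [Field F] {n m : ℕ} (c : Fin m → Fin n → F) (a : Fin m → F) : Prop :=
  2 ≤ (lsupp a).card ∧ ∑ i ∈ lsupp a, C (a i) * zpoly c i = 0

def tMon {F : Type} [Field F] {m : ℕ} (M : Finset (Fin m)) : MvPolynomial (Fin m) F :=
  ∏ i ∈ M, X i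

def PL {F : Type} [Field F] {m : ℕ} (a : Fin m → F) : MvPolynomial (Fin m) F :=
  ∑ i ∈ lsupp a, C (a i) * tMon (lsupp a \ {i})

abbrev ExtAlg (F : Type) [Field F] (k : ℕ) := ExteriorAlgebra F (Fin k → F)

def uGen {F : Type} [Field F] {m : ℕ} (i : Fin m) : ExtAlg F m :=
  ExteriorAlgebra.ι F (Pi.single i 1)

def uList {F : Type} [Field F] {m : ℕ} (l : List (Fin m)) : ExtAlg F m :=
  (l.map uGen).prod

def uM {F : Type} [Field F] {m : ℕ} (M : Finset (Fin m)) : ExtAlg F m :=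
  uList (M.sort (· ≤ ·))

abbrev XiAlg (F : Type) [Field F] (m : ℕ) := MvPolynomial (Fin m) F ⊗[F] ExtAlg F m

def PLS {F : Type} [Field F] {m : ℕ} (a : Fin m → F) (S : Finset (Fin m)) : XiAlg F m :=
  ∑ i ∈ lsupp a \ S,
    (C (a i) * tMon (lsupp a \ insert i S)) ⊗ₜ[F]
      (uM S - ∑ s ∈ Finset.range (S.sort (· ≤ ·)).length, uList ((S.sort (· ≤ ·)).set s i))

/-- The linear functional on `F^n` corresponding to `z_i`. -/
def lfun {F : Type} [Field F] {n m : ℕ} (c : Fin m → Fin n → F) (i : Fin m) :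
    (Fin n → F) →ₗ[F] F :=
  ∑ j, c i j • (LinearMap.proj j : (Fin n → F) →ₗ[F] F)

/-- A subspace `V ⊆ F^n` is special if it is an intersection of hyperplanes `ker z_i`. -/
def IsSpecial {F : Type} [Field F] {n m : ℕ} (c : Fin m → Fin n → F)
    (V : Submodule F (Fin n → F)) : Prop :=
  ∃ S₀ : Finset (Fin m), V = ⨅ i ∈ S₀, LinearMap.ker (lfun c i)

/-- `S_V = {i : V ⊆ ker z_i}`. -/
def SV {F : Type} [Field F] {n m : ℕ} (c : Fin m → Fin n → F)
    (V : Submodule F (Fin n → F)) : Finset (Fin m) :=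
  @Finset.filter _ (fun i => V ≤ LinearMap.ker (lfun c i)) (Classical.decPred _) Finset.univ

/-!
The projection `π` has the section `t_j ↦ t_j`, and `R'` maps to `R`, so `π⁻¹(I_V)` is contained
in `I + ker π`, where `ker π = (t_i : i ∉ S_V)`. The substance is `π(I) ⊆ I_V`: a relation
`p(1/z) = 0` must survive deleting the `t_i` with `i ∉ S_V`. Substitute `x ↦ x + ε⁻¹ v` for a
generic point `v` of `V`. Then `1/z_i` becomes `ε / (z_i(v) + ε z_i(x))`, a power series in `ε`
whose constant term is `1/z_i(x)` if `z_i` vanishes on `V` and `0` otherwise, and setting `ε = 0`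
turns `p(1/z) = 0` into `(π p)(1/z) = 0`.
-/

open scoped PowerSeries

theorem Ideal.comap_eq_sup_ker_of_rightInverse {A B : Type*} [CommRing A] [CommRing B]
    (π : A →+* B) (s : B →+* A) (hs : Function.RightInverse s π) {I : Ideal A} {J : Ideal B}
    (hI : I ≤ J.comap π) (hJ : J ≤ I.comap s) : J.comap π = I ⊔ RingHom.ker π := by
  refine le_antisymm (fun a ha => ?_) (sup_le hI fun a ha => ?_)
  · have hker : a - s (π a) ∈ RingHom.ker π := by simp [RingHom.mem_ker, hs (π a)]
    have hsI : s (π a) ∈ I := hJ ha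
    simpa using Ideal.add_mem _ (Ideal.mem_sup_left hsI) (Ideal.mem_sup_right hker)
  · simp [Ideal.mem_comap, (RingHom.mem_ker).mp ha]

namespace MvPolynomial

variable {R σ : Type*} [CommRing R] [DecidableEq σ] (S : Finset σ)

def restrictVars : MvPolynomial σ R →ₐ[R] MvPolynomial S R :=
  aeval fun i => if h : i ∈ S then X ⟨i, h⟩ else 0

theorem restrictVars_rename (p : MvPolynomial S R) : restrictVars S (rename Subtype.val p) = p :=
  AlgHom.congr_fun (φ₁ := (restrictVars S).comp (rename Subtype.val)) (φ₂ := AlgHom.id R _)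
    (algHom_ext fun i => by simp [restrictVars]) p

theorem sub_rename_restrictVars_mem_span (p : MvPolynomial σ R) :
    p - rename Subtype.val (restrictVars S p) ∈ Ideal.span {p | ∃ i, i ∉ S ∧ p = X i} := by
  induction p using MvPolynomial.induction_on with
  | C a => simp
  | add p q hp hq => simpa [add_sub_add_comm] using Ideal.add_mem _ hp hq
  | mul_X p i hp =>
    by_cases hi : i ∈ S
    · simpa [restrictVars, hi, ← sub_mul] using Ideal.mul_mem_right (X i) _ hp
    · have hX : X i ∈ Ideal.span {p : MvPolynomial σ R | ∃ i, i ∉ S ∧ p = X i} :=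
        Ideal.subset_span ⟨i, hi, rfl⟩
      simpa [restrictVars, hi] using Ideal.mul_mem_left _ p hX

theorem aeval_restrictVars {A : Type*} [CommSemiring A] [Algebra R A] (g : S → A)
    (p : MvPolynomial σ R) :
    aeval g (restrictVars S p) = aeval (fun i => if h : i ∈ S then g ⟨i, h⟩ else 0) p := by
  simp only [restrictVars, comp_aeval_apply, apply_dite, aeval_X, map_zero]

theorem ker_restrictVars :
    RingHom.ker (restrictVars S : MvPolynomial σ R →ₐ[R] MvPolynomial S R) =
      Ideal.span {p | ∃ i, i ∉ S ∧ p = X i} := by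
  refine le_antisymm (fun p hp => ?_) (Ideal.span_le.mpr ?_)
  · simpa [(RingHom.mem_ker).mp hp] using sub_rename_restrictVars_mem_span S p
  · rintro _ ⟨i, hi, rfl⟩
    simp [restrictVars, hi]

end MvPolynomial

theorem map_eq_of_mul_eq_one {A B G : Type*} [CommMonoid A] [CommMonoid B] [FunLike G A B]
    [MonoidHomClass G A B] (f : G) {a b : A} {b' : B} (h : a * b = 1) (h' : f a * b' = 1) :
    f b = b' :=
  left_inv_eq_right_inv (by rw [← map_mul, mul_comm, h, map_one]) h'

theorem IsLocalization.lift_injective_of_injective {R S P : Type*} [CommRing R] [CommRing S]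
    [CommRing P] [Algebra R S] {M : Submonoid R} [IsLocalization M S] (hM : M ≤ nonZeroDivisors R)
    {g : R →+* P} (hg : Function.Injective g) (hunit : ∀ y : M, IsUnit (g y)) :
    Function.Injective (IsLocalization.lift hunit : S → P) := by
  rw [IsLocalization.lift_injective_iff]
  exact fun a b => ((IsLocalization.injective S hM).eq_iff).trans hg.eq_iff.symm

theorem PowerSeries.C_add_X_mul_C_ne_zero {K : Type*} [Field K] (W : K) {Z : K} (hZ : Z ≠ 0) :
    C W + X * C Z ≠ 0 := fun h => hZ (by simpa using congrArg (coeff 1) h)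

open scoped Classical in
theorem PowerSeries.exists_mul_eq_X {K : Type*} [Field K] (W Z : K) (hZ : Z ≠ 0) :
    ∃ t : K⟦X⟧, t * (C W + X * C Z) = X ∧
      constantCoeff t = if W = 0 then Z⁻¹ else 0 := by
  by_cases hW : W = 0
  · refine ⟨C Z⁻¹, ?_, by simp [hW]⟩
    rw [hW, map_zero, zero_add, mul_left_comm, ← map_mul, inv_mul_cancel₀ hZ, map_one, mul_one]
  · refine ⟨X * (C W + X * C Z)⁻¹, ?_, by simp [hW]⟩
    rw [mul_assoc, mul_comm _ (C W + X * C Z), PowerSeries.mul_inv_cancel _ (by simpa using hW),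
      mul_one]

open scoped Classical in
/-- The `u i = ε / (W i + ε Z i)` lie in `K⟦ε⟧`, so a relation among them survives
setting `ε = 0`. -/
theorem PowerSeries.aeval_ite_eq_zero_of_aeval_eq_zero {ι F K L : Type*} [CommRing F] [Field K]
    [Algebra F K] [Field L] [Algebra K⟦X⟧ L] [IsFractionRing K⟦X⟧ L] [Algebra F L]
    [IsScalarTower F K⟦X⟧ L] (W Z : ι → K) (hZ : ∀ i, Z i ≠ 0) (u : ι → L)
    (hu : ∀ i, u i * algebraMap K⟦X⟧ L (C (W i) + X * C (Z i)) = algebraMap K⟦X⟧ L X)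
    (p : MvPolynomial ι F) (hp : MvPolynomial.aeval u p = 0) :
    MvPolynomial.aeval (fun i => if W i = 0 then (Z i)⁻¹ else 0) p = 0 := by
  choose t ht using fun i => exists_mul_eq_X (W i) (Z i) (hZ i)
  have hinj := IsFractionRing.injective K⟦X⟧ L
  have htu : ∀ i, algebraMap K⟦X⟧ L (t i) = u i := by
    intro i
    have hq := (map_ne_zero_iff _ hinj).mpr (C_add_X_mul_C_ne_zero (W i) (hZ i))
    refine mul_right_cancel₀ hq ?_
    rw [hu, ← map_mul, (ht i).1]
  have ht0 : MvPolynomial.aeval t p = 0 := by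
    apply hinj
    rw [map_zero, ← aeval_algebraMap_apply L, Function.comp_def]
    simpa only [htu] using hp
  have hconst := congrArg constantCoeff ht0
  rw [map_aeval, map_zero] at hconst
  have hC : constantCoeff.comp (algebraMap F K⟦X⟧) = algebraMap F K := by
    ext a; simp [algebraMap_apply]
  simpa only [hC, ht, aeval_eq_eval₂Hom] using hconst

section LinearForms

variable {F : Type} [Field F] {n m : ℕ} (c : Fin m → Fin n → F)

theorem aeval_zpoly {A : Type*} [CommSemiring A] [Algebra F A] (i : Fin m) (a : Fin n → A) :
    aeval a (zpoly c i) = ∑ j, c i j • a j := by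
  simp [zpoly, Algebra.smul_def]

theorem aeval_zpoly_add_mul {A : Type*} [CommSemiring A] [Algebra F A] (i : Fin m)
    (a b : Fin n → A) (e : A) :
    aeval (fun j => a j + e * b j) (zpoly c i) = aeval a (zpoly c i) + e * aeval b (zpoly c i) := by
  simp only [aeval_zpoly, smul_add, Finset.sum_add_distrib, Finset.mul_sum, mul_smul_comm]

theorem zpoly_ne_zero {i : Fin m} (hc : c i ≠ 0) : zpoly c i ≠ 0 := by
  refine fun h => hc (funext fun j => ?_)
  simpa [aeval_zpoly, Pi.single_apply] using congrArg (aeval (Pi.single j (1 : F))) h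

theorem mem_SV_iff {k : ℕ} (V : Submodule F (Fin n → F)) (s : Fin k → Fin n → F)
    (hs : Submodule.span F (Set.range s) = V) (i : Fin m) :
    i ∈ SV c V ↔ ∀ r, lfun c i (s r) = 0 := by
  simp [SV, ← hs, Submodule.span_le, Set.range_subset_iff]

/-- Over `K = F(x₁, …, xₙ, y₁, …, y_k)`, where `s₁, …, s_k` span `V`, the witnesses are
`x` itself and `v = ∑ y_r s_r`. -/
theorem exists_generic_point (V : Submodule F (Fin n → F)) :
    ∃ (K : Type) (_ : Field K) (_ : Algebra F K) (x v : Fin n → K),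
      Function.Injective (aeval x : MvPolynomial (Fin n) F → K) ∧
      ∀ i, aeval v (zpoly c i) = 0 ↔ i ∈ SV c V := by
  obtain ⟨k, s, hs⟩ :=
    Submodule.fg_iff_exists_fin_generating_family.mp (IsNoetherian.noetherian V)
  let A := MvPolynomial (Fin n ⊕ Fin k) F
  have hinj := IsFractionRing.injective A (FractionRing A)
  let v : Fin n → A := fun j => ∑ r, s r j • X (Sum.inr r)
  refine ⟨FractionRing A, inferInstance, inferInstance, algebraMap A _ ∘ X ∘ Sum.inl,
    algebraMap A _ ∘ v, fun p q h => ?_, fun i => ?_⟩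
  · simp only [aeval_algebraMap_apply] at h
    exact rename_injective _ Sum.inl_injective (hinj (by rwa [rename_eq_aeval]))
  · have hv : aeval v (zpoly c i) = ∑ r, lfun c i (s r) • X (Sum.inr r) := by
      simp only [v, aeval_zpoly, Finset.smul_sum, smul_smul]
      rw [Finset.sum_comm]
      simp [lfun, Finset.sum_smul]
    rw [aeval_algebraMap_apply, map_eq_zero_iff _ hinj, hv, mem_SV_iff c V s hs]
    have hX : LinearIndependent F fun r : Fin k => (X (Sum.inr r) : A) :=
      (linearIndependent_X (Fin n ⊕ Fin k) F).comp Sum.inr Sum.inr_injective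
    exact ⟨Fintype.linearIndependent_iff.mp hX _, fun h => by simp [h]⟩

end LinearForms

section Relations

variable {F : Type} [Field F] {n m : ℕ} {c : Fin m → Fin n → F}
  {R : Type} [CommRing R] [Algebra F R] [Algebra (MvPolynomial (Fin n) F) R]
  [IsScalarTower F (MvPolynomial (Fin n) F) R] [IsLocalization.Away (∏ i, zpoly c i) R]
  {zinv : Fin m → R}
  (hzinv : ∀ i, algebraMap (MvPolynomial (Fin n) F) R (zpoly c i) * zinv i = 1)
include hzinv

open scoped Classical in
/-- Substituting `x ↦ x + ε⁻¹ v` sends `z_i⁻¹` to `ε / (z_i(v) + ε z_i(x))`. -/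
theorem aeval_ite_eq_zero_of_aeval_zinv_eq_zero {K : Type*} [Field K] [Algebra F K]
    (x v : Fin n → K) (hx : ∀ i, aeval x (zpoly c i) ≠ 0)
    {p : MvPolynomial (Fin m) F} (hp : aeval zinv p = 0) :
    aeval (fun i => if aeval v (zpoly c i) = 0 then (aeval x (zpoly c i))⁻¹ else 0) p = 0 := by
  let L := FractionRing K⟦X⟧
  let ε : L := algebraMap K⟦X⟧ L PowerSeries.X
  have hε : ε ≠ 0 :=
    (map_ne_zero_iff _ (IsFractionRing.injective _ L)).mpr PowerSeries.X_ne_zero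
  let σ : MvPolynomial (Fin n) F →ₐ[F] L :=
    aeval fun j => algebraMap K L (x j) + ε⁻¹ * algebraMap K L (v j)
  have hσ : ∀ i, σ (zpoly c i) * ε = algebraMap K⟦X⟧ L
      (PowerSeries.C (aeval v (zpoly c i)) +
        PowerSeries.X * PowerSeries.C (aeval x (zpoly c i))) := by
    intro i
    have hσi : σ (zpoly c i) = aeval (algebraMap K L ∘ x) (zpoly c i) +
        ε⁻¹ * aeval (algebraMap K L ∘ v) (zpoly c i) :=
      aeval_zpoly_add_mul c i _ _ _
    rw [hσi, aeval_algebraMap_apply, aeval_algebraMap_apply, map_add, map_mul]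
    simp only [IsScalarTower.algebraMap_apply K K⟦X⟧ L, PowerSeries.algebraMap_apply,
      Algebra.algebraMap_self, RingHom.id_apply]
    linear_combination algebraMap K⟦X⟧ L (PowerSeries.C (aeval v (zpoly c i))) *
      inv_mul_cancel₀ hε
  have hσne : ∀ i, σ (zpoly c i) ≠ 0 := fun i h => by
    have hq := hσ i
    rw [h, zero_mul, eq_comm, map_eq_zero_iff _ (IsFractionRing.injective _ L)] at hq
    exact PowerSeries.C_add_X_mul_C_ne_zero _ (hx i) hq
  have hunit : IsUnit (σ (∏ i, zpoly c i)) := by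
    rw [map_prod]
    exact isUnit_iff_ne_zero.mpr (Finset.prod_ne_zero_iff.mpr fun i _ => hσne i)
  let σR : R →ₐ[F] L := IsLocalization.Away.liftAlgHom _ hunit
  have hσR : ∀ a, σR (algebraMap _ R a) = σ a := IsLocalization.Away.lift_eq _ hunit
  refine PowerSeries.aeval_ite_eq_zero_of_aeval_eq_zero (L := L) _ _ hx (fun i => σR (zinv i))
    (fun i => ?_) _ (by rw [← comp_aeval_apply, hp, map_zero])
  rw [← hσ i, ← mul_assoc, mul_comm (σR _), ← hσR, ← map_mul, hzinv, map_one, one_mul]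

theorem aeval_rename_eq_zero_of_aeval_eq_zero {S : Finset (Fin m)}
    {R' : Type} [CommRing R'] [Algebra F R'] [Algebra (MvPolynomial (Fin n) F) R']
    [IsScalarTower F (MvPolynomial (Fin n) F) R'] [IsLocalization.Away (∏ j ∈ S, zpoly c j) R']
    {zinvV : Fin m → R'}
    (hzinvV : ∀ j ∈ S, algebraMap (MvPolynomial (Fin n) F) R' (zpoly c j) * zinvV j = 1)
    {w : MvPolynomial S F} (hw : aeval (fun j : S => zinvV j) w = 0) :
    aeval zinv (rename Subtype.val w) = 0 := by
  have hunit : IsUnit (algebraMap (MvPolynomial (Fin n) F) R (∏ j ∈ S, zpoly c j)) :=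
    isUnit_of_dvd_unit (map_dvd _ (Finset.prod_dvd_prod_of_subset _ _ _ S.subset_univ))
      (IsLocalization.Away.algebraMap_isUnit _)
  let ψ : R' →ₐ[F] R :=
    IsLocalization.Away.liftAlgHom (f := IsScalarTower.toAlgHom F _ R) _ hunit
  have hψa : ∀ a, ψ (algebraMap _ R' a) = algebraMap _ R a :=
    IsLocalization.Away.lift_eq _ hunit
  have hψ : ∀ j : S, ψ (zinvV j) = zinv j := fun j =>
    map_eq_of_mul_eq_one ψ (hzinvV j j.2) (by rw [hψa]; exact hzinv j)
  have hψw := congrArg ψ hw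
  rw [comp_aeval_apply, map_zero] at hψw
  simpa [aeval_rename, Function.comp_def, hψ] using hψw

theorem aeval_restrictVars_eq_zero_of_aeval_eq_zero (hc : ∀ i, c i ≠ 0)
    (V : Submodule F (Fin n → F))
    {R' : Type} [CommRing R'] [Algebra F R'] [Algebra (MvPolynomial (Fin n) F) R']
    [IsScalarTower F (MvPolynomial (Fin n) F) R']
    [IsLocalization.Away (∏ j ∈ SV c V, zpoly c j) R']
    {zinvV : Fin m → R'}
    (hzinvV : ∀ j ∈ SV c V, algebraMap (MvPolynomial (Fin n) F) R' (zpoly c j) * zinvV j = 1)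
    {p : MvPolynomial (Fin m) F} (hp : aeval zinv p = 0) :
    aeval (fun j : SV c V => zinvV j) (restrictVars (SV c V) p) = 0 := by
  classical
  obtain ⟨K, _, _, x, v, hx, hv⟩ := exists_generic_point c V
  have hZ : ∀ i, aeval x (zpoly c i) ≠ 0 := fun i =>
    (map_ne_zero_iff _ hx).mpr (zpoly_ne_zero c (hc i))
  have hprod : ∏ j ∈ SV c V, zpoly c j ≠ 0 :=
    Finset.prod_ne_zero_iff.mpr fun j _ => zpoly_ne_zero c (hc j)
  have hunit : IsUnit (aeval x (∏ j ∈ SV c V, zpoly c j)) :=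
    isUnit_iff_ne_zero.mpr ((map_ne_zero_iff _ hx).mpr hprod)
  let φ : R' →ₐ[F] K := IsLocalization.Away.liftAlgHom _ hunit
  have hφa : ∀ a, φ (algebraMap _ R' a) = aeval x a := IsLocalization.Away.lift_eq _ hunit
  have hφ : ∀ j ∈ SV c V, φ (zinvV j) = (aeval x (zpoly c j))⁻¹ := fun j hj =>
    map_eq_of_mul_eq_one φ (hzinvV j hj) (by rw [hφa]; exact mul_inv_cancel₀ (hZ j))
  have hφinj : Function.Injective φ :=
    IsLocalization.lift_injective_of_injective (powers_le_nonZeroDivisors_of_noZeroDivisors hprod)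
      (g := (aeval x : MvPolynomial (Fin n) F →ₐ[F] K).toRingHom) hx _
  apply hφinj
  rw [map_zero, comp_aeval_apply, aeval_restrictVars]
  have hspec : (fun i => if h : i ∈ SV c V then φ (zinvV (⟨i, h⟩ : SV c V)) else 0) =
      fun i => if aeval v (zpoly c i) = 0 then (aeval x (zpoly c i))⁻¹ else 0 := by
    funext i
    by_cases hi : i ∈ SV c V
    · simp [hi, hφ, (hv i).mpr hi]
    · simp [hi, mt (hv i).mp hi]
  rw [hspec]
  exact aeval_ite_eq_zero_of_aeval_zinv_eq_zero hzinv x v hZ hp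

end Relations

/-- `I_V` is realised as the kernel of `t_j ↦ z_j⁻¹` into the localization `R'` of
`F[x₁,…,x_n]` at the `z_j`, `j ∈ S_V`, into which the localized symmetric algebra of
`(F^n/V)^*` embeds. -/
theorem statement5_general
    (F : Type) [Field F] (n m : ℕ)
    (c : Fin m → Fin n → F) (hc : ∀ i, c i ≠ 0)
    (V : Submodule F (Fin n → F))
    (R : Type) [CommRing R] [Algebra F R] [Algebra (MvPolynomial (Fin n) F) R]
    [IsScalarTower F (MvPolynomial (Fin n) F) R]
    [IsLocalization.Away (∏ i, zpoly c i) R]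
    (zinv : Fin m → R)
    (hzinv : ∀ i, algebraMap (MvPolynomial (Fin n) F) R (zpoly c i) * zinv i = 1)
    (R' : Type) [CommRing R'] [Algebra F R'] [Algebra (MvPolynomial (Fin n) F) R']
    [IsScalarTower F (MvPolynomial (Fin n) F) R']
    [IsLocalization.Away (∏ j ∈ SV c V, zpoly c j) R']
    (zinvV : Fin m → R')
    (hzinvV : ∀ j ∈ SV c V, algebraMap (MvPolynomial (Fin n) F) R' (zpoly c j) * zinvV j = 1) :
    Ideal.comap
      (MvPolynomial.aeval (fun i : Fin m =>
          if h : i ∈ SV c V then (X (⟨i, h⟩ : {j : Fin m // j ∈ SV c V}) :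
            MvPolynomial {j : Fin m // j ∈ SV c V} F) else 0) :
        MvPolynomial (Fin m) F →ₐ[F] MvPolynomial {j : Fin m // j ∈ SV c V} F).toRingHom
      (RingHom.ker (MvPolynomial.aeval (fun j : {j : Fin m // j ∈ SV c V} => zinvV j.1) :
        MvPolynomial {j : Fin m // j ∈ SV c V} F →ₐ[F] R').toRingHom)
    = RingHom.ker (MvPolynomial.aeval zinv : MvPolynomial (Fin m) F →ₐ[F] R).toRingHom ⊔
        Ideal.span {p : MvPolynomial (Fin m) F |
          ∃ i : Fin m, i ∉ SV c V ∧ p = X i} := by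
  rw [← ker_restrictVars]
  refine Ideal.comap_eq_sup_ker_of_rightInverse (restrictVars (SV c V)).toRingHom
    (rename Subtype.val).toRingHom (restrictVars_rename (SV c V)) (fun p hp => ?_) (fun w hw => ?_)
  · exact aeval_restrictVars_eq_zero_of_aeval_eq_zero hzinv hc V hzinvV hp
  · exact aeval_rename_eq_zero_of_aeval_eq_zero hzinv hzinvV hw

/-- For a special subspace `V`, under the projection
`π : F[t₁,…,t_m] → F[t_j : j ∈ S_V]` (killing the `t_i` with `i ∉ S_V`), one has
`π⁻¹(I_V) = I + (t_i : i ∉ S_V)`.  Here `I_V` is the kernel of `t_j ↦ z̄_j⁻¹`; since the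
localized symmetric algebra of `(F^n/V)^*` embeds into the localization `R'` of
`F[x₁,…,x_n]` inverting the `z_j`, `j ∈ S_V`, the ideal `I_V` is the kernel of the map
to `R'`. -/
theorem statement5
    (F : Type) [Field F] (n m : ℕ) (hn : 0 < n) (hm : 0 < m)
    (c : Fin m → Fin n → F) (hc : ∀ i, c i ≠ 0)
    (V : Submodule F (Fin n → F)) (hV : IsSpecial c V)
    (R : Type) [CommRing R] [Algebra F R] [Algebra (MvPolynomial (Fin n) F) R]
    [IsScalarTower F (MvPolynomial (Fin n) F) R]
    [IsLocalization.Away (∏ i, zpoly c i) R]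
    (zinv : Fin m → R)
    (hzinv : ∀ i, algebraMap (MvPolynomial (Fin n) F) R (zpoly c i) * zinv i = 1)
    (R' : Type) [CommRing R'] [Algebra F R'] [Algebra (MvPolynomial (Fin n) F) R']
    [IsScalarTower F (MvPolynomial (Fin n) F) R']
    [IsLocalization.Away (∏ j ∈ SV c V, zpoly c j) R']
    (zinvV : Fin m → R')
    (hzinvV : ∀ j ∈ SV c V, algebraMap (MvPolynomial (Fin n) F) R' (zpoly c j) * zinvV j = 1) :
    Ideal.comap
      (MvPolynomial.aeval (fun i : Fin m =>
          if h : i ∈ SV c V then (X (⟨i, h⟩ : {j : Fin m // j ∈ SV c V}) :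
            MvPolynomial {j : Fin m // j ∈ SV c V} F) else 0) :
        MvPolynomial (Fin m) F →ₐ[F] MvPolynomial {j : Fin m // j ∈ SV c V} F).toRingHom
      (RingHom.ker (MvPolynomial.aeval (fun j : {j : Fin m // j ∈ SV c V} => zinvV j.1) :
        MvPolynomial {j : Fin m // j ∈ SV c V} F →ₐ[F] R').toRingHom)
    = RingHom.ker (MvPolynomial.aeval zinv : MvPolynomial (Fin m) F →ₐ[F] R).toRingHom ⊔
        Ideal.span {p : MvPolynomial (Fin m) F |
          ∃ i : Fin m, i ∉ SV c V ∧ p = X i} :=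
  statement5_general F n m c hc V R zinv hzinv R' zinvV hzinvV
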